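/- Consider an adaptive observation process over a finite alphabet, with the type η ∈ {0,1} chosen uniformly at random, where for every time t ≤ T and every history, the conditional laws under types 0 and 1 differ by at most ε in ℓ1 norm and satisfy the δ lower bound on any point of disagreement, with 10ε < δ. If T ≤ 0.14 · δ/ε², then for any guessing function f of the type from the first T observations, the probability of error (1/2)P₀(f=1) + (1/2)P₁(f=0) exceeds 1/3. -/
import Mathlib


/-- Joint law of the first `T` observations of an adaptive process whose
conditional law of the next observation given history `h` under type `η` is `q η h`. -/
def jointLaw {A : Type*} (q : Bool → List A → A → ℝ) (T : ℕ)
    (η : Bool) (x : Fin T → A) : ℝ :=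
  ∏ t : Fin T, q η ((List.ofFn x).take t.val) (x t)

lemma jointLaw_cons {A : Type*} (q : Bool → List A → A → ℝ) (T : ℕ)
    (η : Bool) (a : A) (x : Fin T → A) :
    jointLaw q (T+1) η (Fin.cons a x)
      = q η [] a * jointLaw (fun η h => q η (a :: h)) T η x := by
  unfold jointLaw
  rw [Fin.prod_univ_succ]
  simp [List.ofFn_succ, Fin.val_succ]

lemma sum_pi_succ {A : Type*} [Fintype A] (T : ℕ) (F : (Fin (T+1) → A) → ℝ) :
    ∑ y : Fin (T+1) → A, F y = ∑ a : A, ∑ x : Fin T → A, F (Fin.cons a x) := by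
  rw [← Equiv.sum_comp (Fin.consEquiv (fun _ : Fin (T+1) => A)) F, Fintype.sum_prod_type]
  rfl

lemma jointLaw_nonneg {A : Type*} (q : Bool → List A → A → ℝ) (T : ℕ)
    (h0 : ∀ η h m, 0 ≤ q η h m) (η : Bool) (x : Fin T → A) :
    0 ≤ jointLaw q T η x :=
  Finset.prod_nonneg fun _ _ => h0 _ _ _

lemma sum_jointLaw {A : Type*} [Fintype A] (q : Bool → List A → A → ℝ) (T : ℕ)
    (hsum : ∀ η h, ∑ m, q η h m = 1) (η : Bool) :
    ∑ x : Fin T → A, jointLaw q T η x = 1 := by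
  induction T generalizing q with
  | zero => simp [jointLaw]
  | succ T ih =>
    rw [sum_pi_succ]
    have : ∀ a : A, ∑ x : Fin T → A, jointLaw q (T+1) η (Fin.cons a x)
        = q η [] a := by
      intro a
      simp_rw [jointLaw_cons, ← Finset.mul_sum]
      rw [ih (fun η h => q η (a :: h)) (fun η h => hsum η (a :: h)), mul_one]
    simp_rw [this]
    exact hsum η []

lemma sqrt_mul_le_half (a b : ℝ) (ha : 0 ≤ a) (hb : 0 ≤ b) :
    Real.sqrt (a * b) ≤ (a + b) / 2 := by
  have h1 : a * b ≤ ((a + b) / 2) ^ 2 := by nlinarith [sq_nonneg (a - b)]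
  calc Real.sqrt (a * b) ≤ Real.sqrt (((a + b) / 2) ^ 2) := Real.sqrt_le_sqrt h1
    _ = (a + b) / 2 := Real.sqrt_sq (by linarith)

lemma bhat_le_one {ι : Type*} [Fintype ι] (p r : ι → ℝ)
    (hp : ∀ i, 0 ≤ p i) (hr : ∀ i, 0 ≤ r i)
    (hps : ∑ i, p i = 1) (hrs : ∑ i, r i = 1) :
    ∑ i, Real.sqrt (p i * r i) ≤ 1 := by
  calc ∑ i, Real.sqrt (p i * r i) ≤ ∑ i, (p i + r i) / 2 :=
        Finset.sum_le_sum fun i _ => sqrt_mul_le_half _ _ (hp i) (hr i)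
    _ = 1 := by rw [← Finset.sum_div, Finset.sum_add_distrib, hps, hrs]; norm_num

lemma BC_le_one {A : Type*} [Fintype A] (q : Bool → List A → A → ℝ) (T : ℕ)
    (h0 : ∀ η h m, 0 ≤ q η h m) (hsum : ∀ η h, ∑ m, q η h m = 1) :
    ∑ x : Fin T → A, Real.sqrt (jointLaw q T false x * jointLaw q T true x) ≤ 1 :=
  bhat_le_one _ _ (jointLaw_nonneg q T h0 false) (jointLaw_nonneg q T h0 true)
    (sum_jointLaw q T hsum false) (sum_jointLaw q T hsum true)

lemma BC_ge {A : Type*} [Fintype A] (q : Bool → List A → A → ℝ) (T : ℕ) (β : ℝ)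
    (hβ : 0 ≤ β)
    (h0 : ∀ η h m, 0 ≤ q η h m) (hsum : ∀ η h, ∑ m, q η h m = 1)
    (hstep : ∀ h, 1 - β ≤ ∑ m, Real.sqrt (q false h m * q true h m)) :
    1 - (T : ℝ) * β ≤
      ∑ x : Fin T → A, Real.sqrt (jointLaw q T false x * jointLaw q T true x) := by
  induction T generalizing q with
  | zero => simp [jointLaw]
  | succ T ih =>
    rw [sum_pi_succ]
    set t : A → ℝ := fun a => Real.sqrt (q false [] a * q true [] a) with ht
    set S : A → ℝ := fun a => ∑ x : Fin T → A,
      Real.sqrt (jointLaw (fun η h => q η (a :: h)) T false x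
        * jointLaw (fun η h => q η (a :: h)) T true x) with hS
    have hsplit : ∀ (a : A) (x : Fin T → A),
        Real.sqrt (jointLaw q (T+1) false (Fin.cons a x) * jointLaw q (T+1) true (Fin.cons a x))
          = t a * Real.sqrt (jointLaw (fun η h => q η (a :: h)) T false x
              * jointLaw (fun η h => q η (a :: h)) T true x) := by
      intro a x
      rw [jointLaw_cons, jointLaw_cons]
      rw [show (q false [] a * jointLaw (fun η h => q η (a :: h)) T false x)
            * (q true [] a * jointLaw (fun η h => q η (a :: h)) T true x)
          = (q false [] a * q true [] a)
            * (jointLaw (fun η h => q η (a :: h)) T false x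
              * jointLaw (fun η h => q η (a :: h)) T true x) by ring]
      exact Real.sqrt_mul (mul_nonneg (h0 _ _ _) (h0 _ _ _)) _
    have hrw : ∑ a : A, ∑ x : Fin T → A,
        Real.sqrt (jointLaw q (T+1) false (Fin.cons a x) * jointLaw q (T+1) true (Fin.cons a x))
        = ∑ a : A, t a * S a := by
      apply Finset.sum_congr rfl
      intro a _
      rw [hS, Finset.mul_sum]
      exact Finset.sum_congr rfl fun x _ => hsplit a x
    rw [hrw]
    have htn : ∀ a, 0 ≤ t a := fun a => Real.sqrt_nonneg _
    have hts : 1 - β ≤ ∑ a, t a := hstep []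
    have hts1 : ∑ a, t a ≤ 1 :=
      bhat_le_one _ _ (fun m => h0 false [] m) (fun m => h0 true [] m)
        (hsum false []) (hsum true [])
    have hSa : ∀ a, 1 - (T : ℝ) * β ≤ S a := fun a =>
      ih (fun η h => q η (a :: h)) (fun η h m => h0 η _ m)
        (fun η h => hsum η _) (fun h => hstep _)
    have hSa1 : ∀ a, S a ≤ 1 := fun a =>
      BC_le_one (fun η h => q η (a :: h)) T (fun η h m => h0 η _ m) (fun η h => hsum η _)
    have h1 : ∑ a, t a * (1 - S a) ≤ (∑ a, t a) * ((T : ℝ) * β) := by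
      rw [Finset.sum_mul]
      apply Finset.sum_le_sum
      intro a _
      exact mul_le_mul_of_nonneg_left (by linarith [hSa a]) (htn a)
    have h2 : (∑ a, t a) * ((T : ℝ) * β) ≤ (T : ℝ) * β :=
      mul_le_of_le_one_left (by positivity) hts1
    have h3 : ∑ a, t a * S a = (∑ a, t a) - ∑ a, t a * (1 - S a) := by
      rw [← Finset.sum_sub_distrib]
      exact Finset.sum_congr rfl fun a _ => by ring
    push_cast
    linarith

lemma step_bound {A : Type*} [Fintype A] (q : Bool → List A → A → ℝ)
    (ε δ : ℝ) (hε : 0 < ε) (hδ : 0 < δ)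
    (hsum : ∀ η h, ∑ m, q η h m = 1)
    (hpos : ∀ η h m, 0 < q η h m)
    (hl1 : ∀ h : List A, ∑ m, |q true h m - q false h m| ≤ ε)
    (hδlow : ∀ (h : List A) m, q true h m ≠ q false h m →
      δ ≤ q false h m ∧ δ ≤ q true h m)
    (h : List A) :
    1 - ε ^ 2 / (8 * δ) ≤ ∑ m, Real.sqrt (q false h m * q true h m) := by
  set a : A → ℝ := fun m => q false h m with ha
  set b : A → ℝ := fun m => q true h m with hb
  have han : ∀ m, 0 ≤ a m := fun m => (hpos false h m).le
  have hbn : ∀ m, 0 ≤ b m := fun m => (hpos true h m).le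
  have key : ∀ m, (Real.sqrt (b m) - Real.sqrt (a m)) ^ 2 ≤ (b m - a m) ^ 2 / (4 * δ) := by
    intro m
    by_cases hab : b m = a m
    · rw [hab, sub_self, zero_pow (by norm_num : (2:ℕ) ≠ 0)]; positivity
    · obtain ⟨hda, hdb⟩ := hδlow h m hab
      have hsa : Real.sqrt δ ≤ Real.sqrt (a m) := Real.sqrt_le_sqrt hda
      have hsb : Real.sqrt δ ≤ Real.sqrt (b m) := Real.sqrt_le_sqrt hdb
      have hsd : Real.sqrt δ ^ 2 = δ := Real.sq_sqrt hδ.le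
      have hsan : (0:ℝ) ≤ Real.sqrt (a m) := Real.sqrt_nonneg _
      have hsbn : (0:ℝ) ≤ Real.sqrt (b m) := Real.sqrt_nonneg _
      have h4 : 4 * δ ≤ (Real.sqrt (b m) + Real.sqrt (a m)) ^ 2 := by
        nlinarith [Real.sqrt_nonneg δ]
      have hdiff : (Real.sqrt (b m) - Real.sqrt (a m))
          * (Real.sqrt (b m) + Real.sqrt (a m)) = b m - a m := by
        have h1 : Real.sqrt (b m) ^ 2 = b m := Real.sq_sqrt (hbn m)
        have h2 : Real.sqrt (a m) ^ 2 = a m := Real.sq_sqrt (han m)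
        nlinarith
      have hfact : (Real.sqrt (b m) - Real.sqrt (a m)) ^ 2
          * (Real.sqrt (b m) + Real.sqrt (a m)) ^ 2 = (b m - a m) ^ 2 := by
        rw [← mul_pow, hdiff]
      rw [le_div_iff₀ (by positivity)]
      nlinarith [sq_nonneg (Real.sqrt (b m) - Real.sqrt (a m))]
  have habs : ∀ m, |b m - a m| ≤ ε := by
    intro m
    calc |b m - a m| ≤ ∑ m', |b m' - a m'| :=
          Finset.single_le_sum (f := fun m' => |b m' - a m'|)
            (fun i _ => abs_nonneg _) (Finset.mem_univ m)
      _ ≤ ε := hl1 h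
  have hsq : ∑ m, (b m - a m) ^ 2 ≤ ε * ε := by
    calc ∑ m, (b m - a m) ^ 2 = ∑ m, |b m - a m| * |b m - a m| := by
          apply Finset.sum_congr rfl; intro m _; rw [sq, ← abs_mul_abs_self]
      _ ≤ ∑ m, ε * |b m - a m| :=
          Finset.sum_le_sum fun m _ => mul_le_mul_of_nonneg_right (habs m) (abs_nonneg _)
      _ = ε * ∑ m, |b m - a m| := by rw [Finset.mul_sum]
      _ ≤ ε * ε := mul_le_mul_of_nonneg_left (hl1 h) hε.le
  have key2 : ∑ m, (Real.sqrt (b m) - Real.sqrt (a m)) ^ 2 ≤ ε ^ 2 / (4 * δ) := by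
    calc ∑ m, (Real.sqrt (b m) - Real.sqrt (a m)) ^ 2
        ≤ ∑ m, (b m - a m) ^ 2 / (4 * δ) := Finset.sum_le_sum fun m _ => key m
      _ = (∑ m, (b m - a m) ^ 2) / (4 * δ) := by rw [Finset.sum_div]
      _ ≤ (ε * ε) / (4 * δ) := by
          apply div_le_div_of_nonneg_right hsq; positivity
      _ = ε ^ 2 / (4 * δ) := by ring
  have expand : ∀ m, Real.sqrt (a m * b m)
      = (a m + b m) / 2 - (Real.sqrt (b m) - Real.sqrt (a m)) ^ 2 / 2 := by
    intro m
    have h1 : Real.sqrt (a m) * Real.sqrt (b m) = Real.sqrt (a m * b m) :=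
      (Real.sqrt_mul (han m) _).symm
    have h2 : Real.sqrt (a m) ^ 2 = a m := Real.sq_sqrt (han m)
    have h3 : Real.sqrt (b m) ^ 2 = b m := Real.sq_sqrt (hbn m)
    nlinarith
  have hsumab : ∑ m, (a m + b m) / 2 = 1 := by
    rw [← Finset.sum_div, Finset.sum_add_distrib]
    rw [show (∑ m, a m) = 1 from hsum false h, show (∑ m, b m) = 1 from hsum true h]
    norm_num
  have : ∑ m, Real.sqrt (a m * b m)
      = 1 - (∑ m, (Real.sqrt (b m) - Real.sqrt (a m)) ^ 2) / 2 := by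
    rw [Finset.sum_congr rfl (fun m _ => expand m), Finset.sum_sub_distrib, hsumab,
      Finset.sum_div]
  rw [show (∑ m, Real.sqrt (q false h m * q true h m)) = ∑ m, Real.sqrt (a m * b m) from rfl,
    this]
  have hhalf : ε ^ 2 / (4 * δ) / 2 = ε ^ 2 / (8 * δ) := by ring
  linarith

lemma min_eq_half (a b : ℝ) : min a b = (a + b) / 2 - |b - a| / 2 := by
  rcases le_total a b with h | h
  · rw [min_eq_left h, abs_of_nonneg (by linarith)]; ring
  · rw [min_eq_right h, abs_of_nonpos (by linarith)]; ring

set_option maxHeartbeats 1000000 in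
/-- Sample-complexity lower bound for ACDT(ε,δ): with the type uniform on {0,1},
if T ≤ 0.14·δ/ε² then any guess function errs with probability exceeding 1/3. -/
theorem stmt12 {A : Type*} [Fintype A] (q : Bool → List A → A → ℝ) (T : ℕ)
    (ε δ : ℝ) (hε : 0 < ε) (hδ : 0 < δ) (hεδ : 10 * ε < δ)
    (hsum : ∀ η h, ∑ m, q η h m = 1)
    (hpos : ∀ η h m, 0 < q η h m)
    (hl1 : ∀ h : List A, ∑ m, |q true h m - q false h m| ≤ ε)
    (hδlow : ∀ (h : List A) m, q true h m ≠ q false h m →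
      δ ≤ q false h m ∧ δ ≤ q true h m)
    (hT : (T : ℝ) ≤ 0.14 * δ / ε ^ 2)
    (f : (Fin T → A) → Bool) :
    1 / 3 <
      (1 / 2) * (∑ x ∈ Finset.univ.filter (fun x => f x = true), jointLaw q T false x)
        + (1 / 2) * ∑ x ∈ Finset.univ.filter (fun x => f x = false), jointLaw q T true x := by
  have h0 : ∀ η h m, 0 ≤ q η h m := fun η h m => (hpos η h m).le
  set J0 : (Fin T → A) → ℝ := fun x => jointLaw q T false x with hJ0
  set J1 : (Fin T → A) → ℝ := fun x => jointLaw q T true x with hJ1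
  have hJ0n : ∀ x, 0 ≤ J0 x := jointLaw_nonneg q T h0 false
  have hJ1n : ∀ x, 0 ≤ J1 x := jointLaw_nonneg q T h0 true
  have hJ0s : ∑ x, J0 x = 1 := sum_jointLaw q T hsum false
  have hJ1s : ∑ x, J1 x = 1 := sum_jointLaw q T hsum true
  set β : ℝ := ε ^ 2 / (8 * δ) with hβdef
  have hβ : 0 ≤ β := by positivity
  set BC : ℝ := ∑ x, Real.sqrt (J0 x * J1 x) with hBCdef
  have hBC : 1 - (T : ℝ) * β ≤ BC :=
    BC_ge q T β hβ h0 hsum (step_bound q ε δ hε hδ hsum hpos hl1 hδlow)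
  have hBC1 : BC ≤ 1 := BC_le_one q T h0 hsum
  have hTβ : (T : ℝ) * β ≤ 0.14 / 8 := by
    have h1 : (T : ℝ) * β ≤ (0.14 * δ / ε ^ 2) * β :=
      mul_le_mul_of_nonneg_right hT hβ
    have h2 : (0.14 * δ / ε ^ 2) * β = 0.14 / 8 := by
      rw [hβdef]; field_simp
    linarith
  -- sums of squares of sqrt differences / sums
  have hsq0 : ∀ x, Real.sqrt (J0 x) ^ 2 = J0 x := fun x => Real.sq_sqrt (hJ0n x)
  have hsq1 : ∀ x, Real.sqrt (J1 x) ^ 2 = J1 x := fun x => Real.sq_sqrt (hJ1n x)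
  have hmulsq : ∀ x, Real.sqrt (J0 x) * Real.sqrt (J1 x) = Real.sqrt (J0 x * J1 x) :=
    fun x => (Real.sqrt_mul (hJ0n x) _).symm
  have hdiffsum : ∑ x, (Real.sqrt (J1 x) - Real.sqrt (J0 x)) ^ 2 = 2 - 2 * BC := by
    have : ∀ x, (Real.sqrt (J1 x) - Real.sqrt (J0 x)) ^ 2
        = J0 x + J1 x - 2 * Real.sqrt (J0 x * J1 x) := by
      intro x; have := hsq0 x; have := hsq1 x; have := hmulsq x; nlinarith
    rw [Finset.sum_congr rfl (fun x _ => this x)]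
    rw [Finset.sum_sub_distrib, Finset.sum_add_distrib, hJ0s, hJ1s, ← Finset.mul_sum,
      ← hBCdef]
    ring
  have hsumsum : ∑ x, (Real.sqrt (J1 x) + Real.sqrt (J0 x)) ^ 2 = 2 + 2 * BC := by
    have : ∀ x, (Real.sqrt (J1 x) + Real.sqrt (J0 x)) ^ 2
        = J0 x + J1 x + 2 * Real.sqrt (J0 x * J1 x) := by
      intro x; have := hsq0 x; have := hsq1 x; have := hmulsq x; nlinarith
    rw [Finset.sum_congr rfl (fun x _ => this x)]
    rw [Finset.sum_add_distrib, Finset.sum_add_distrib, hJ0s, hJ1s, ← Finset.mul_sum,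
      ← hBCdef]
    ring
  set TV : ℝ := ∑ x, |J1 x - J0 x| with hTVdef
  have hTVn : 0 ≤ TV := Finset.sum_nonneg fun x _ => abs_nonneg _
  have hTVrw : TV = ∑ x, |Real.sqrt (J1 x) - Real.sqrt (J0 x)|
      * (Real.sqrt (J1 x) + Real.sqrt (J0 x)) := by
    apply Finset.sum_congr rfl
    intro x _
    have hd : (Real.sqrt (J1 x) - Real.sqrt (J0 x)) * (Real.sqrt (J1 x) + Real.sqrt (J0 x))
        = J1 x - J0 x := by
      have := hsq0 x; have := hsq1 x; nlinarith
    have hpossum : (0:ℝ) ≤ Real.sqrt (J1 x) + Real.sqrt (J0 x) := by positivity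
    rw [← hd, abs_mul, abs_of_nonneg hpossum]
  have hCS : TV ^ 2 ≤ (2 - 2 * BC) * (2 + 2 * BC) := by
    rw [hTVrw]
    calc (∑ x, |Real.sqrt (J1 x) - Real.sqrt (J0 x)|
          * (Real.sqrt (J1 x) + Real.sqrt (J0 x))) ^ 2
        ≤ (∑ x, |Real.sqrt (J1 x) - Real.sqrt (J0 x)| ^ 2)
          * ∑ x, (Real.sqrt (J1 x) + Real.sqrt (J0 x)) ^ 2 :=
          Finset.sum_mul_sq_le_sq_mul_sq _ _ _
      _ = (2 - 2 * BC) * (2 + 2 * BC) := by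
          simp_rw [sq_abs]; rw [hdiffsum, hsumsum]
  have hBClb : 1 - 0.14 / 8 ≤ BC := by linarith
  have hTVsq : TV ^ 2 ≤ 0.14 := by nlinarith
  have hTVlt : TV < 2 / 3 := by nlinarith
  -- relate error probability to TV
  have hfilter0 : ∑ x ∈ Finset.univ.filter (fun x => f x = true), jointLaw q T false x
      = ∑ x, if f x = true then J0 x else 0 := Finset.sum_filter _ _
  have hfilter1 : ∑ x ∈ Finset.univ.filter (fun x => f x = false), jointLaw q T true x
      = ∑ x, if f x = false then J1 x else 0 := Finset.sum_filter _ _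
  have hmin : ∑ x, min (J0 x) (J1 x)
      ≤ (∑ x, if f x = true then J0 x else 0) + (∑ x, if f x = false then J1 x else 0) := by
    rw [← Finset.sum_add_distrib]
    apply Finset.sum_le_sum
    intro x _
    cases hfx : f x <;> simp [hfx, min_le_left, min_le_right]
  have hminval : ∑ x, min (J0 x) (J1 x) = 1 - TV / 2 := by
    rw [Finset.sum_congr rfl (fun x _ => min_eq_half (J0 x) (J1 x)),
      Finset.sum_sub_distrib, ← Finset.sum_div, ← Finset.sum_div,
      Finset.sum_add_distrib, hJ0s, hJ1s, ← hTVdef]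
    norm_num
  rw [hfilter0, hfilter1]
  nlinarith
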